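/- arXiv:1207.0302 — 2 statements merged into one kernel-verified Lean document; each statement's English description precedes it below -/
import Mathlib

section
/- Let p_0, p_1 ∈ (0,1) and let c_0, c_1, d_0, d_1 ∈ (0,1) satisfy c_0 + d_1 = 1 and c_1 + d_0 = 1. Let (a_i(n))_{n≥0} and (η_i(n))_{n≥2} be real sequences for i ∈ {0,1}, and for each n ≥ 2 and i ∈ {0,1} let X_{i,n} be a binomial B(n, p_i) random variable. Assume that for all n ≥ 2 and both i ∈ {0,1}: a_i(n) = c_i E[a_i(X_{i,n})] + d_i E[a_{1−i}(n − X_{i,n})] + η_i(n). If there exists α > 0 such that η_i(n) = O(n^{−α}) as n → ∞ for both i ∈ {0,1}, then a_i(n) = O(1) as n → ∞ for both i ∈ {0,1}, i.e. the sequences (a_0(n)) and (a_1(n)) are bounded. -/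
open MeasureTheory ProbabilityTheory Real Filter Topology

noncomputable section

/-- `P(X = k)` for `X` binomial `B(n, q)` distributed. -/
def binomialWeight (n : ℕ) (q : ℝ) (k : ℕ) : ℝ :=
  n.choose k * q ^ k * (1 - q) ^ (n - k)

/-!
Dividing `|aᵢ|` by `dᵢ` gives nonnegative sequences `uᵢ` with
`uᵢ(n) ≤ cᵢ E uᵢ(X) + d₁₋ᵢ E u₁₋ᵢ(n - X) + O(n^{-α})`, whose two weights now sum to `1`.
With the potential `φ(k) = (k + 1)^{-β}`, `β = min α 1`, strong induction gives
`uᵢ(n) ≤ C (1 - φ(n) / 2)`: by Jensen `E φ(X) ≥ φ(E X)`, and as `E X ≤ r n` with `r < 1` this beats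
`φ(n)` by a fixed factor `γ > 1`. The gain `C (γ - 1) φ(n) / 2` absorbs both the error term and the
exponentially small weight `r^n` of the terms `X = n` (resp. `X = 0`), which refer back to `u(n)`.
-/

open Finset

lemma binomialWeight_eq_eval_bernsteinPolynomial (n : ℕ) (q : ℝ) (k : ℕ) :
    binomialWeight n q k = (bernsteinPolynomial ℝ n k).eval q := by
  simp [binomialWeight, bernsteinPolynomial]

lemma binomialWeight_nonneg {q : ℝ} (hq : q ∈ Set.Icc 0 1) (n k : ℕ) :
    0 ≤ binomialWeight n q k := by
  have := sub_nonneg.2 hq.2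
  have := hq.1
  unfold binomialWeight
  positivity

lemma binomialWeight_self (n : ℕ) (q : ℝ) : binomialWeight n q n = q ^ n := by
  simp [binomialWeight]

lemma binomialWeight_one_sub (q : ℝ) {n k : ℕ} (hk : k ≤ n) :
    binomialWeight n (1 - q) k = binomialWeight n q (n - k) := by
  simp only [binomialWeight_eq_eval_bernsteinPolynomial, ← bernsteinPolynomial.flip ℝ n k hk,
    Polynomial.eval_comp, Polynomial.eval_sub, Polynomial.eval_one, Polynomial.eval_X]

lemma sum_binomialWeight (n : ℕ) (q : ℝ) : ∑ k ∈ range (n + 1), binomialWeight n q k = 1 := by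
  simpa [binomialWeight_eq_eval_bernsteinPolynomial, Polynomial.eval_finsetSum] using
    congrArg (Polynomial.eval q) (bernsteinPolynomial.sum ℝ n)

/-- `E f(X)` for `X` binomial `B(n, q)` distributed. -/
def binomialMean (n : ℕ) (q : ℝ) (f : ℕ → ℝ) : ℝ :=
  ∑ k ∈ range (n + 1), binomialWeight n q k * f k

section binomialMean

variable {n : ℕ} {q : ℝ} {f g : ℕ → ℝ}

lemma binomialMean_natCast (n : ℕ) (q : ℝ) : binomialMean n q (fun k => k) = n * q := by
  simpa [binomialMean, binomialWeight_eq_eval_bernsteinPolynomial, Polynomial.eval_finsetSum,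
    mul_comm] using congrArg (Polynomial.eval q) (bernsteinPolynomial.sum_smul ℝ n)

lemma binomialMean_add_mul (A B : ℝ) (f : ℕ → ℝ) :
    binomialMean n q (fun k => A + B * f k) = A + B * binomialMean n q f := by
  simp only [binomialMean, mul_add, sum_add_distrib, ← sum_mul, sum_binomialWeight,
    mul_left_comm _ B, ← mul_sum]
  ring

lemma binomialMean_mul (B : ℝ) (f : ℕ → ℝ) :
    binomialMean n q (fun k => B * f k) = B * binomialMean n q f := by
  simpa using binomialMean_add_mul (n := n) (q := q) 0 B f

lemma binomialMean_comp_sub (n : ℕ) (q : ℝ) (f : ℕ → ℝ) :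
    binomialMean n q (fun k => f (n - k)) = binomialMean n (1 - q) f := by
  rw [binomialMean, ← sum_range_reflect]
  refine sum_congr rfl fun k hk => ?_
  have hk : k ≤ n := Nat.lt_succ_iff.1 (mem_range.1 hk)
  rw [binomialWeight_one_sub q hk, Nat.add_sub_cancel, Nat.sub_sub_self hk]

variable (hq : q ∈ Set.Icc 0 1)
include hq

lemma abs_binomialMean_le : |binomialMean n q f| ≤ binomialMean n q (fun k => |f k|) :=
  (abs_sum_le_sum_abs _ _).trans_eq <| sum_congr rfl fun k _ => by
    rw [abs_mul, abs_of_nonneg (binomialWeight_nonneg hq n k)]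

lemma binomialMean_le_add_pow (hfg : ∀ k < n, f k ≤ g k) (hg : 0 ≤ g n) :
    binomialMean n q f ≤ binomialMean n q g + q ^ n * f n := by
  simp only [binomialMean, sum_range_succ, binomialWeight_self]
  have : ∑ k ∈ range n, binomialWeight n q k * f k ≤ ∑ k ∈ range n, binomialWeight n q k * g k :=
    sum_le_sum fun k hk =>
      mul_le_mul_of_nonneg_left (hfg k (mem_range.1 hk)) (binomialWeight_nonneg hq n k)
  nlinarith [mul_nonneg (pow_nonneg hq.1 n) hg]

end binomialMean

lemma convexOn_rpow_neg {β : ℝ} (hβ : 0 ≤ β) : ConvexOn ℝ (Set.Ioi 0) fun x : ℝ => x ^ (-β) := by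
  refine ⟨convex_Ioi 0, fun x hx y hy s t hs ht hst => ?_⟩
  have hxy : 0 < s • x + t • y := convex_Ioi 0 hx hy hs ht hst
  simp only [smul_eq_mul] at hxy ⊢
  rw [rpow_def_of_pos hx, rpow_def_of_pos hy, rpow_def_of_pos hxy]
  have hlog : s * log x + t * log y ≤ log (s * x + t * y) := by
    simpa using strictConcaveOn_log_Ioi.concaveOn.2 hx hy hs ht hst
  calc exp (log (s * x + t * y) * -β) ≤ exp (s * (log x * -β) + t * (log y * -β)) :=
        exp_le_exp.2 (by nlinarith)
    _ ≤ s * exp (log x * -β) + t * exp (log y * -β) := by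
        simpa using convexOn_exp.2 (Set.mem_univ (log x * -β)) (Set.mem_univ (log y * -β)) hs ht hst

def decay (β : ℝ) (k : ℕ) : ℝ := ((k : ℝ) + 1) ^ (-β)

section decay

variable {β : ℝ}

lemma decay_pos (β : ℝ) (k : ℕ) : 0 < decay β k := by
  unfold decay
  positivity

lemma decay_le_one (hβ : 0 ≤ β) (k : ℕ) : decay β k ≤ 1 :=
  rpow_le_one_of_one_le_of_nonpos (by simp) (neg_nonpos.2 hβ)

lemma add_one_rpow_neg_le_binomialMean_decay (hβ : 0 ≤ β) {q : ℝ} (hq : q ∈ Set.Icc 0 1) (n : ℕ) :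
    ((n : ℝ) * q + 1) ^ (-β) ≤ binomialMean n q (decay β) := by
  have hmean : ∑ k ∈ range (n + 1), binomialWeight n q k • ((k : ℝ) + 1) = n * q + 1 := by
    have := binomialMean_add_mul (n := n) (q := q) 1 1 (fun k => k)
    rw [binomialMean_natCast] at this
    simp only [binomialMean, smul_eq_mul, one_mul, add_comm (1 : ℝ)] at this ⊢
    linarith
  rw [← hmean]
  exact (convexOn_rpow_neg hβ).map_sum_le (fun k _ => binomialWeight_nonneg hq n k)
    (sum_binomialWeight n q) (fun k _ => Set.mem_Ioi.2 (by positivity))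

end decay

lemma binomialMean_le_potential {q r C β : ℝ} {n : ℕ} {v : ℕ → ℝ} (hβ : 0 ≤ β)
    (hq : q ∈ Set.Icc 0 1) (hqr : q ≤ r) (hr : r ≤ 1) (hC : 0 ≤ C) (hn : 1 ≤ n)
    (hv : ∀ k < n, v k ≤ C * (1 - decay β k / 2)) :
    binomialMean n q v ≤ C * (1 - ((1 + r) / 2) ^ (-β) * decay β n / 2) + q ^ n * v n := by
  have hn' : (1 : ℝ) ≤ n := by exact_mod_cast hn
  have hgrowth : ((1 + r) / 2) ^ (-β) * decay β n ≤ ((n : ℝ) * q + 1) ^ (-β) := by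
    rw [decay, ← mul_rpow (by linarith [hq.1.trans hqr]) (by positivity)]
    -- `n q + 1 ≤ (1 + r) / 2 * (n + 1)` since `(n - 1) (1 - r) ≥ 0`
    refine rpow_le_rpow_of_nonpos (by nlinarith [hq.1]) ?_ (neg_nonpos.2 hβ)
    nlinarith [mul_nonneg (sub_nonneg.2 hn') (sub_nonneg.2 hr)]
  have hjensen := add_one_rpow_neg_le_binomialMean_decay hβ hq n
  have hpot : binomialMean n q (fun k => C * (1 - decay β k / 2))
      = C + -(C / 2) * binomialMean n q (decay β) := by
    rw [← binomialMean_add_mul]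
    congr 1
    ext k
    ring
  calc binomialMean n q v
      ≤ binomialMean n q (fun k => C * (1 - decay β k / 2)) + q ^ n * v n :=
        binomialMean_le_add_pow hq hv (mul_nonneg hC (by linarith [decay_le_one hβ n]))
    _ ≤ C * (1 - ((1 + r) / 2) ^ (-β) * decay β n / 2) + q ^ n * v n := by
        rw [hpot]
        nlinarith

lemma eventually_pow_le_mul_decay {r ε β : ℝ} (hr0 : 0 ≤ r) (hr1 : r < 1) (hε : 0 < ε)
    (hβ : β ≤ 1) : ∀ᶠ n : ℕ in atTop, r ^ n ≤ ε * decay β n := by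
  have hlim : Tendsto (fun n : ℕ => ((n : ℝ) + 1) * r ^ n) atTop (𝓝 0) := by
    simpa [add_mul] using (tendsto_self_mul_const_pow_of_lt_one hr0 hr1).add
      (tendsto_pow_atTop_nhds_zero_of_lt_one hr0 hr1)
  filter_upwards [hlim.eventually_le_const hε] with n hn
  have hinv : ((n : ℝ) + 1)⁻¹ ≤ decay β n := by
    rw [decay, ← rpow_neg_one]
    exact rpow_le_rpow_of_exponent_le (by simp) (by linarith)
  calc r ^ n = ((n + 1) * r ^ n) * ((n : ℝ) + 1)⁻¹ := by field_simp
    _ ≤ ε * decay β n := mul_le_mul hn hinv (by positivity) hε.le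

lemma isBigO_rpow_neg_decay {α β : ℝ} (hβ : 0 ≤ β) (hβα : β ≤ α) :
    (fun n : ℕ => (n : ℝ) ^ (-α)) =O[atTop] decay β := by
  refine Asymptotics.IsBigO.of_bound (2 ^ β) ?_
  filter_upwards [eventually_ge_atTop 1] with n hn
  have hn' : (1 : ℝ) ≤ n := by exact_mod_cast hn
  rw [norm_of_nonneg (rpow_nonneg (by positivity) _), norm_of_nonneg (decay_pos β n).le]
  calc (n : ℝ) ^ (-α) ≤ (n : ℝ) ^ (-β) := rpow_le_rpow_of_exponent_le hn' (by linarith)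
    _ = 2 ^ β * (2 * n) ^ (-β) := by
        rw [mul_rpow (by norm_num) (by positivity), rpow_neg (by norm_num), rpow_neg (by positivity)]
        field_simp
    _ ≤ 2 ^ β * decay β n := by
        gcongr
        exact rpow_le_rpow_of_nonpos (by positivity) (by linarith) (neg_nonpos.2 hβ)

lemma le_potential_of_le_add_mul_self {M C K t x γ : ℝ} (hC : 0 ≤ C) (hx : x ∈ Set.Icc 0 1)
    (ht0 : 0 ≤ t) (ht1 : t < 1) (ht : 4 * t ≤ (γ - 1) * x) (hK : 4 * K ≤ (γ - 1) * C)
    (hM : M ≤ C * (1 - γ * x / 2) + t * M + K * x) :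
    M ≤ C * (1 - x / 2) := by
  have hx' := hx.2
  refine le_of_mul_le_mul_right (a := 1 - t) ?_ (by linarith)
  nlinarith [mul_le_mul_of_nonneg_left hK hx.1, mul_le_mul_of_nonneg_left ht hC,
    mul_nonneg (mul_nonneg ht0 hC) hx.1]

lemma exists_eventually_le_mul_decay {ι : Type*} [Fintype ι] {e : ι → ℕ → ℝ} {α β : ℝ}
    (hβ : 0 ≤ β) (hβα : β ≤ α) (he : ∀ i, e i =O[atTop] fun n : ℕ => (n : ℝ) ^ (-α)) :
    ∃ K, ∀ᶠ n in atTop, ∀ i, e i n ≤ K * decay β n := by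
  choose K hK0 hK using fun i => ((he i).trans (isBigO_rpow_neg_decay hβ hβα)).exists_pos
  refine ⟨∑ j, K j, eventually_all.2 fun i => (hK i).bound.mono fun n hn => ?_⟩
  rw [norm_of_nonneg (decay_pos β n).le] at hn
  calc e i n ≤ K i * decay β n := (le_abs_self _).trans hn
    _ ≤ (∑ j, K j) * decay β n := by
        gcongr
        · exact (decay_pos β n).le
        · exact single_le_sum (fun j _ => (hK0 j).le) (mem_univ i)

section subsolution

variable {p c : Bool → ℝ} {u e : Bool → ℕ → ℝ}

lemma le_potential_of_forall_lt {r β C K : ℝ} {n : ℕ}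
    (hp : ∀ i, p i ∈ Set.Icc 0 1) (hpr : ∀ i, p i ≤ r ∧ 1 - p i ≤ r) (hr : r ≤ 1)
    (hc : ∀ i, c i ∈ Set.Icc 0 1) (hu : ∀ i, 0 ≤ u i n) (hβ : 0 ≤ β) (hC : 0 ≤ C) (hn : 1 ≤ n)
    (hsub : ∀ i, u i n ≤ c i * binomialMean n (p i) (u i)
      + (1 - c i) * binomialMean n (1 - p i) (u (!i)) + e i n)
    (he : ∀ i, e i n ≤ K * decay β n) (hrn : r ^ n < 1)
    (htail : 4 * r ^ n ≤ (((1 + r) / 2) ^ (-β) - 1) * decay β n)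
    (hK : 4 * K ≤ (((1 + r) / 2) ^ (-β) - 1) * C)
    (ih : ∀ k < n, ∀ i, u i k ≤ C * (1 - decay β k / 2)) (i : Bool) :
    u i n ≤ C * (1 - decay β n / 2) := by
  set γ := ((1 + r) / 2) ^ (-β)
  set M := max (u false n) (u true n)
  have hM : ∀ j, u j n ≤ M := by
    intro j
    cases j
    exacts [le_max_left _ _, le_max_right _ _]
  have hmean : ∀ q ∈ Set.Icc (0 : ℝ) 1, q ≤ r → ∀ j,
      binomialMean n q (u j) ≤ C * (1 - γ * decay β n / 2) + r ^ n * M := fun q hq hqr j =>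
    (binomialMean_le_potential hβ hq hqr hr hC hn fun k hk => ih k hk j).trans <|
      add_le_add_right (mul_le_mul (pow_le_pow_left₀ hq.1 hqr n) (hM j) (hu j)
        (pow_nonneg (hq.1.trans hqr) n)) _
  have hbound : ∀ j, u j n ≤ C * (1 - γ * decay β n / 2) + r ^ n * M + K * decay β n := by
    intro j
    have hself := hmean (p j) (hp j) (hpr j).1 j
    have hother := hmean (1 - p j) ⟨sub_nonneg.2 (hp j).2, by linarith [(hp j).1]⟩ (hpr j).2 (!j)
    have hcj := hc j
    calc u j n ≤ c j * binomialMean n (p j) (u j)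
          + (1 - c j) * binomialMean n (1 - p j) (u (!j)) + e j n := hsub j
      _ ≤ c j * (C * (1 - γ * decay β n / 2) + r ^ n * M)
          + (1 - c j) * (C * (1 - γ * decay β n / 2) + r ^ n * M) + K * decay β n := by
        gcongr
        · exact hcj.1
        · exact sub_nonneg.2 hcj.2
        · exact he j
      _ = C * (1 - γ * decay β n / 2) + r ^ n * M + K * decay β n := by ring
  exact (hM i).trans <| le_potential_of_le_add_mul_self hC
    ⟨(decay_pos β n).le, decay_le_one hβ n⟩ (pow_nonneg ((hp i).1.trans (hpr i).1) n) hrn htail hK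
    (max_le (hbound false) (hbound true))

theorem exists_bound_of_le_binomialMean {α : ℝ} (hp : ∀ i, p i ∈ Set.Ioo 0 1)
    (hc : ∀ i, c i ∈ Set.Icc 0 1) (hu : ∀ i n, 0 ≤ u i n)
    (hsub : ∀ᶠ n in atTop, ∀ i, u i n ≤ c i * binomialMean n (p i) (u i)
      + (1 - c i) * binomialMean n (1 - p i) (u (!i)) + e i n)
    (hα : 0 < α) (he : ∀ i, e i =O[atTop] fun n : ℕ => (n : ℝ) ^ (-α)) :
    ∃ C, ∀ i n, u i n ≤ C := by
  set β := min α 1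
  have hβ : 0 < β := lt_min hα one_pos
  obtain ⟨i₀, hi₀⟩ := Finite.exists_max fun i => max (p i) (1 - p i)
  set r := max (p i₀) (1 - p i₀)
  have hpr : ∀ i, p i ≤ r ∧ 1 - p i ≤ r := fun i => max_le_iff.1 (hi₀ i)
  have hr0 : 0 ≤ r := (hp i₀).1.le.trans (le_max_left _ _)
  have hr1 : r < 1 := max_lt (hp i₀).2 (by linarith [(hp i₀).1])
  set γ := ((1 + r) / 2) ^ (-β)
  have hγ : 1 < γ := one_lt_rpow_of_pos_of_lt_one_of_neg (by positivity) (by linarith) (by linarith)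
  obtain ⟨K, hK⟩ := exists_eventually_le_mul_decay hβ.le (min_le_left α 1) he
  obtain ⟨N, hN⟩ := eventually_atTop.1 <| hsub.and <| hK.and <|
    (eventually_pow_le_mul_decay hr0 hr1 (by linarith : 0 < (γ - 1) / 4) (min_le_right α 1)).and
    (eventually_ge_atTop 1)
  obtain ⟨B, hB⟩ : BddAbove (Set.range fun x : Bool × Fin N => u x.1 x.2) :=
    (Set.finite_range _).bddAbove
  set C := max (max (2 * B) (4 * K / (γ - 1))) 0
  have hC : 0 ≤ C := le_max_right _ _
  have hpot : ∀ n i, u i n ≤ C * (1 - decay β n / 2) := by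
    intro n
    induction n using Nat.strong_induction_on with
    | _ n ih =>
      intro i
      rcases lt_or_ge n N with hn | hn
      · have hBn : u i n ≤ B := hB ⟨(i, ⟨n, hn⟩), rfl⟩
        have h2B : 2 * B ≤ C := (le_max_left _ _).trans (le_max_left _ _)
        nlinarith [decay_le_one hβ.le n]
      · obtain ⟨hsub, he, htail, hn1⟩ := hN n hn
        refine le_potential_of_forall_lt (fun i => Set.Ioo_subset_Icc_self (hp i)) hpr hr1.le hc
          (fun i => hu i n) hβ.le hC hn1 hsub he (pow_lt_one₀ hr0 hr1 (by omega)) (by linarith)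
          ?_ ih i
        have := (le_max_right _ _).trans (le_max_left _ _ : _ ≤ C)
        rwa [div_le_iff₀' (by linarith)] at this
  exact ⟨C, fun i n => (hpot n i).trans (by nlinarith [decay_pos β n])⟩

end subsolution

lemma abs_div_le_binomialMean {n : ℕ} {q c d d' η x : ℝ} {f g : ℕ → ℝ} (hq : q ∈ Set.Icc 0 1)
    (hc : 0 ≤ c) (hd : 0 < d) (hd' : 0 < d')
    (hx : x = c * binomialMean n q f + d * binomialMean n q (fun k => g (n - k)) + η) :
    |x| / d ≤ c * binomialMean n q (fun k => |f k| / d)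
      + d' * binomialMean n (1 - q) (fun k => |g k| / d') + |η| / d := by
  have hf : binomialMean n q (fun k => |f k|) = d * binomialMean n q (fun k => |f k| / d) := by
    rw [← binomialMean_mul]
    simp only [mul_div_cancel₀ _ hd.ne']
  have hg : binomialMean n q (fun k => |g (n - k)|)
      = d' * binomialMean n (1 - q) (fun k => |g k| / d') := by
    rw [← binomialMean_mul, ← binomialMean_comp_sub]
    simp only [mul_div_cancel₀ _ hd'.ne']
  rw [div_le_iff₀ hd]
  calc |x| ≤ c * |binomialMean n q f| + d * |binomialMean n q (fun k => g (n - k))| + |η| := by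
        rw [hx]
        refine (abs_add_three _ _ _).trans_eq ?_
        rw [abs_mul, abs_mul, abs_of_nonneg hc, abs_of_pos hd]
    _ ≤ c * binomialMean n q (fun k => |f k|) + d * binomialMean n q (fun k => |g (n - k)|)
        + |η| := by
        gcongr <;> exact abs_binomialMean_le hq
    _ = _ := by
        rw [hf, hg]
        field_simp

/-- Lemma 3, a transfer result: if real sequences `a_i` satisfy the
system `a_i(n) = c_i E[a_i(X_{i,n})] + d_i E[a_{1-i}(n - X_{i,n})] + η_i(n)` for `n ≥ 2`,
where `X_{i,n}` is binomial `B(n, p_i)` distributed, `c_i, d_i ∈ (0,1)` with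
`c_0 + d_1 = c_1 + d_0 = 1`, and `η_i(n) = O(n^{-α})` for some `α > 0`, then the
sequences `a_0` and `a_1` are bounded, i.e. `a_i(n) = O(1)`. -/
theorem binomial_recurrence_transfer
    (p : Bool → ℝ) (hp : ∀ i, p i ∈ Set.Ioo (0 : ℝ) 1)
    (c d : Bool → ℝ) (hc : ∀ i, c i ∈ Set.Ioo (0 : ℝ) 1) (hd : ∀ i, d i ∈ Set.Ioo (0 : ℝ) 1)
    (hcd0 : c false + d true = 1) (hcd1 : c true + d false = 1)
    (a η : Bool → ℕ → ℝ)
    (hrec : ∀ i : Bool, ∀ n : ℕ, 2 ≤ n →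
      a i n = c i * (∑ k ∈ Finset.range (n + 1), binomialWeight n (p i) k * a i k)
            + d i * (∑ k ∈ Finset.range (n + 1), binomialWeight n (p i) k * a (!i) (n - k))
            + η i n)
    (α : ℝ) (hα : 0 < α)
    (hη : ∀ i : Bool, (fun n : ℕ => η i n) =O[atTop] fun n : ℕ => (n : ℝ) ^ (-α)) :
    ∃ C : ℝ, ∀ (i : Bool) (n : ℕ), |a i n| ≤ C := by
  have hd0 (i : Bool) : 0 < d i := (hd i).1
  have hdc (i : Bool) : d (!i) = 1 - c i := by
    cases i
    · simp only [Bool.not_false]; linarith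
    · simp only [Bool.not_true]; linarith
  have hsub : ∀ᶠ n in atTop, ∀ i, |a i n| / d i
      ≤ c i * binomialMean n (p i) (fun k => |a i k| / d i)
        + (1 - c i) * binomialMean n (1 - p i) (fun k => |a (!i) k| / d (!i)) + |η i n| / d i := by
    filter_upwards [eventually_ge_atTop 2] with n hn i
    rw [← hdc i]
    exact abs_div_le_binomialMean (Set.Ioo_subset_Icc_self (hp i)) (hc i).1.le (hd0 i) (hd0 (!i))
      (hrec i n hn)
  obtain ⟨C, hC⟩ := exists_bound_of_le_binomialMean (u := fun i n => |a i n| / d i)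
    (e := fun i n => |η i n| / d i) hp (fun i => Set.Ioo_subset_Icc_self (hc i))
    (fun i n => div_nonneg (abs_nonneg _) (hd0 i).le) hsub hα fun i => by
      simpa [div_eq_inv_mul] using (hη i).abs_left.const_mul_left (d i)⁻¹
  refine ⟨C, fun i n => ?_⟩
  calc |a i n| = d i * (|a i n| / d i) := (mul_div_cancel₀ _ (hd0 i).ne').symm
    _ ≤ 1 * C := mul_le_mul (hd i).2.le (hC i n) (div_nonneg (abs_nonneg _) (hd0 i).le) zero_le_one
    _ = C := one_mul C
end
end

section
/- Let s ∈ (2,3] and p_{00}, p_{11} ∈ (0,1), and set ξ := max_{i∈{0,1}} (p_{ii}^{s/2} + (1 − p_{ii})^{s/2}). Then ξ < 1, and for all (τ_0,τ_1), (ρ_0,ρ_1) ∈ M² the map T satisfies ζ_s^∨(T(τ_0,τ_1), T(ρ_0,ρ_1)) ≤ ξ · ζ_s^∨((τ_0,τ_1), (ρ_0,ρ_1)); in particular T is a contraction on (M², ζ_s^∨). -/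
/-!
A test function `f ∈ F_s` agrees with its second-order Taylor polynomial at `0` up to `|x|^s`,
and that polynomial has the same integral against every measure of `M_s(0,1)`; hence `ζ_s` is
finite on `M_s(0,1)`. Since `x ↦ f (a x + c) / a^s` lies in `F_s` again, a scaling `a` costs a
factor `a^s` and a shift costs nothing. Integrating out the independent coordinate (Fubini) and
passing through the hybrid law `ρ₀ ⊗ τ₁` therefore gives
`ζ_s(L(aW⁰ + bW¹), L(aV⁰ + bV¹)) ≤ a^s ζ_s(τ₀, ρ₀) + b^s ζ_s(τ₁, ρ₁)` for independent
`Wⁱ ∼ τᵢ` and independent `Vⁱ ∼ ρᵢ`.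
For `a = √p`, `b = √(1 - p)` the coefficients sum to `p^(s/2) + (1 - p)^(s/2) < p + (1 - p) = 1`.
-/

open MeasureTheory ProbabilityTheory Real Filter Topology

noncomputable section

/-- The class `F_s` of test functions for the Zolotarev metric `ζ_s`, `2 < s ≤ 3`:
twice continuously differentiable functions whose second derivative is Hölder
continuous of order `s - 2` with constant `1`. -/
def zolotarevF (s : ℝ) : Set (ℝ → ℝ) :=
  {f | ContDiff ℝ 2 f ∧
    ∀ x y : ℝ, |iteratedDeriv 2 f x - iteratedDeriv 2 f y| ≤ |x - y| ^ (s - 2)}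

/-- The Zolotarev distance `ζ_s(τ, ρ) = sup_{f ∈ F_s} |∫ f dτ - ∫ f dρ|`. -/
def zolotarevDist (s : ℝ) (τ ρ : Measure ℝ) : ℝ :=
  sSup {r : ℝ | ∃ f ∈ zolotarevF s, r = |(∫ x, f x ∂τ) - ∫ x, f x ∂ρ|}

/-- Membership in `M_s(0,1)`: Borel probability measures on `ℝ` with mean `0`,
variance `1` and finite absolute moment of order `s`. -/
def MemMs (s : ℝ) (τ : Measure ℝ) : Prop :=
  IsProbabilityMeasure τ ∧ (∫ x, x ∂τ) = 0 ∧ (∫ x, x ^ 2 ∂τ) = 1 ∧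
    Integrable (fun x => |x| ^ s) τ

/-- The map `T` on pairs of probability measures:
`T(τ_0, τ_1) = (L(√p_{00} W^0 + √(1-p_{00}) W^1), L(√(1-p_{11}) W^0 + √p_{11} W^1))`
with `W^0 ∼ τ_0`, `W^1 ∼ τ_1` independent. -/
def Tmap (p00 p11 : ℝ) (τ : Measure ℝ × Measure ℝ) : Measure ℝ × Measure ℝ :=
  ((τ.1.prod τ.2).map fun z => Real.sqrt p00 * z.1 + Real.sqrt (1 - p00) * z.2,
   (τ.1.prod τ.2).map fun z => Real.sqrt (1 - p11) * z.1 + Real.sqrt p11 * z.2)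

/-- The metric `ζ_s^∨` on pairs. -/
def zolotarevDistMax (s : ℝ) (τ ρ : Measure ℝ × Measure ℝ) : ℝ :=
  max (zolotarevDist s τ.1 ρ.1) (zolotarevDist s τ.2 ρ.2)

lemma abs_sub_le_rpow_of_abs_deriv_le {g g' : ℝ → ℝ} {r : ℝ} (hr : 0 ≤ r)
    (hg : ∀ t, HasDerivAt g (g' t) t) (hg' : ∀ t, |g' t| ≤ |t| ^ r) (x : ℝ) :
    |g x - g 0| ≤ |x| ^ (r + 1) := by
  have hbound : ∀ t ∈ segment ℝ 0 x, ‖g' t‖ ≤ |x| ^ r := fun t ht => by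
    rw [segment_eq_uIcc] at ht
    simpa using (hg' t).trans
      (Real.rpow_le_rpow (abs_nonneg t) (by simpa using Set.abs_sub_left_of_mem_uIcc ht) hr)
  have := (convex_segment (0 : ℝ) x).norm_image_sub_le_of_norm_hasDerivWithin_le
    (fun t _ => (hg t).hasDerivWithinAt) hbound (left_mem_segment ℝ 0 x) (right_mem_segment ℝ 0 x)
  rwa [Real.norm_eq_abs, Real.norm_eq_abs, sub_zero,
    ← Real.rpow_add_one' (abs_nonneg x) (by linarith)] at this

lemma ContDiff.hasDerivAt_deriv {f : ℝ → ℝ} (hf : ContDiff ℝ 2 f) (x : ℝ) :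
    HasDerivAt (deriv f) (iteratedDeriv 2 f x) x := by
  have hf' : ContDiff ℝ 1 (deriv f) := ((contDiff_succ_iff_deriv (n := 1)).mp hf).2.2
  rw [iteratedDeriv_succ, iteratedDeriv_one]
  exact (hf'.differentiable one_ne_zero x).hasDerivAt

def taylorPoly2 (f : ℝ → ℝ) (x : ℝ) : ℝ :=
  f 0 + deriv f 0 * x + iteratedDeriv 2 f 0 / 2 * x ^ 2

lemma abs_sub_taylorPoly2_le {s : ℝ} (hs : 2 < s) {f : ℝ → ℝ} (hf : f ∈ zolotarevF s)
    (x : ℝ) : |f x - taylorPoly2 f x| ≤ |x| ^ s := by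
  obtain ⟨hf2, hHolder⟩ := hf
  set c := iteratedDeriv 2 f 0
  have hderiv : ∀ t, |deriv f t - deriv f 0 - c * t| ≤ |t| ^ (s - 1) := fun t => by
    have := abs_sub_le_rpow_of_abs_deriv_le (g := fun t => deriv f t - c * t)
      (g' := fun t => iteratedDeriv 2 f t - c) (r := s - 2) (by linarith)
      (fun t => (hf2.hasDerivAt_deriv t).sub (by simpa using (hasDerivAt_id t).const_mul c))
      (fun t => by simpa using hHolder t 0) t
    convert this using 2 <;> ring
  have := abs_sub_le_rpow_of_abs_deriv_le (g := fun t => f t - taylorPoly2 f t)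
    (g' := fun t => deriv f t - deriv f 0 - c * t) (r := s - 1) (by linarith) (fun t => ?_) hderiv x
  · convert this using 2
    · simp [taylorPoly2]
    · ring
  · have hpoly : HasDerivAt (taylorPoly2 f) (deriv f 0 + c * t) t :=
      ((((hasDerivAt_id t).const_mul (deriv f 0)).const_add (f 0)).add
        ((hasDerivAt_pow 2 t).const_mul (c / 2))).congr_deriv (by simp; ring)
    exact ((hf2.differentiable (by norm_num) t).hasDerivAt.sub hpoly).congr_deriv (by ring)

lemma zero_mem_zolotarevF (s : ℝ) : (0 : ℝ → ℝ) ∈ zolotarevF s :=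
  ⟨contDiff_const, fun x y => by simpa using Real.rpow_nonneg (abs_nonneg (x - y)) (s - 2)⟩

lemma comp_affine_div_mem_zolotarevF {s : ℝ} {f : ℝ → ℝ} (hf : f ∈ zolotarevF s)
    {a : ℝ} (ha : 0 < a) (c : ℝ) : (fun x => f (a * x + c) / a ^ s) ∈ zolotarevF s := by
  obtain ⟨hf2, hHolder⟩ := hf
  have hshift : ContDiff ℝ 2 (fun y => f (y + c)) := hf2.comp (contDiff_id.add contDiff_const)
  have hD : ∀ x, iteratedDeriv 2 (fun x => f (a * x + c) / a ^ s) x =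
      a ^ 2 / a ^ s * iteratedDeriv 2 f (a * x + c) := fun x => by
    rw [iteratedDeriv_div_const, iteratedDeriv_comp_const_mul hshift a,
      iteratedDeriv_comp_add_const]
    ring
  refine ⟨(hf2.comp ((contDiff_const.mul contDiff_id).add contDiff_const)).div_const _,
    fun x y => ?_⟩
  have has : 0 < a ^ s := Real.rpow_pos_of_pos ha s
  calc |iteratedDeriv 2 (fun x => f (a * x + c) / a ^ s) x -
        iteratedDeriv 2 (fun x => f (a * x + c) / a ^ s) y|
      = a ^ 2 / a ^ s * |iteratedDeriv 2 f (a * x + c) - iteratedDeriv 2 f (a * y + c)| := by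
        rw [hD, hD, ← mul_sub, abs_mul, abs_of_pos (by positivity)]
    _ ≤ a ^ 2 / a ^ s * |a * x + c - (a * y + c)| ^ (s - 2) := by gcongr; exact hHolder _ _
    _ = |x - y| ^ (s - 2) := by
        rw [show a * x + c - (a * y + c) = a * (x - y) by ring, abs_mul, abs_of_pos ha,
          Real.mul_rpow ha.le (abs_nonneg _), Real.rpow_sub ha, Real.rpow_two]
        field_simp

lemma rpow_le_one_add_rpow {x r s : ℝ} (hx : 0 ≤ x) (hr : 0 ≤ r) (hrs : r ≤ s) :
    x ^ r ≤ 1 + x ^ s := by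
  rcases le_total x 1 with h | h
  · linarith [Real.rpow_le_one hx h hr, Real.rpow_nonneg hx s]
  · linarith [Real.rpow_le_rpow_of_exponent_le h hrs]

lemma abs_quadratic_le {s : ℝ} (hs : 2 ≤ s) (a b c x : ℝ) :
    |a + b * x + c * x ^ 2| ≤ (|a| + |b| + |c|) * (1 + |x| ^ s) := by
  have h1 : |x| ≤ 1 + |x| ^ s := by
    simpa using rpow_le_one_add_rpow (abs_nonneg x) zero_le_one (by linarith)
  have h2 : |x| ^ 2 ≤ 1 + |x| ^ s := by
    simpa using rpow_le_one_add_rpow (abs_nonneg x) zero_le_two hs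
  calc |a + b * x + c * x ^ 2| ≤ |a| + |b| * |x| + |c| * |x| ^ 2 := by
        have := abs_add_three a (b * x) (c * x ^ 2)
        rwa [abs_mul, abs_mul, abs_pow] at this
    _ ≤ (|a| + |b| + |c|) * (1 + |x| ^ s) := by
        nlinarith [mul_le_mul_of_nonneg_left h1 (abs_nonneg b),
          mul_le_mul_of_nonneg_left h2 (abs_nonneg c),
          mul_nonneg (abs_nonneg a) (Real.rpow_nonneg (abs_nonneg x) s)]

lemma abs_add_rpow_le {s : ℝ} (hs : 1 ≤ s) (u v : ℝ) :
    |u + v| ^ s ≤ 2 ^ (s - 1) * (|u| ^ s + |v| ^ s) :=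
  calc |u + v| ^ s ≤ (|u| + |v|) ^ s :=
        Real.rpow_le_rpow (abs_nonneg _) (abs_add_le u v) (by linarith)
    _ ≤ 2 ^ (s - 1) * (|u| ^ s + |v| ^ s) := by
        exact_mod_cast
          NNReal.rpow_add_le_mul_rpow_add_rpow ⟨|u|, abs_nonneg u⟩ ⟨|v|, abs_nonneg v⟩ hs

lemma integrable_of_abs_le_mul_one_add {α : Type*} [MeasurableSpace α] {μ : Measure α}
    [IsFiniteMeasure μ] {m g : α → ℝ} (hm : Integrable m μ) (hg : AEStronglyMeasurable g μ)
    (C : ℝ) (hgm : ∀ x, |g x| ≤ C * (1 + m x)) : Integrable g μ :=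
  (((integrable_const 1).add hm).const_mul C).mono' hg (.of_forall hgm)

namespace MemMs

variable {s : ℝ} {μ : Measure ℝ}

lemma integrable_of_abs_le (hμ : MemMs s μ) {g : ℝ → ℝ} (hg : Continuous g) (C : ℝ)
    (hgm : ∀ x, |g x| ≤ C * (1 + |x| ^ s)) : Integrable g μ :=
  have := hμ.1
  integrable_of_abs_le_mul_one_add hμ.2.2.2 hg.aestronglyMeasurable C hgm

lemma integrable_pow (hμ : MemMs s μ) {n : ℕ} (hn : (n : ℝ) ≤ s) :
    Integrable (fun x => x ^ n) μ :=
  hμ.integrable_of_abs_le (continuous_pow n) 1 fun x => by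
    simpa [abs_pow] using rpow_le_one_add_rpow (abs_nonneg x) n.cast_nonneg hn

lemma integrable_and_integral_quadratic (hs : 2 ≤ s) (hμ : MemMs s μ) (a b c : ℝ) :
    Integrable (fun x => a + b * x + c * x ^ 2) μ ∧ ∫ x, a + b * x + c * x ^ 2 ∂μ = a + c := by
  have := hμ.1
  have h1 : Integrable (fun x : ℝ => x) μ := by
    simpa using hμ.integrable_pow (n := 1) (by norm_num; linarith)
  have h2 : Integrable (fun x : ℝ => x ^ 2) μ := hμ.integrable_pow (by exact_mod_cast hs)
  refine ⟨((integrable_const a).add (h1.const_mul b)).add (h2.const_mul c), ?_⟩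
  rw [integral_add (f := fun x => a + b * x) ((integrable_const a).add (h1.const_mul b))
      (h2.const_mul c), integral_add (integrable_const a) (h1.const_mul b), integral_const,
    integral_const_mul, integral_const_mul, hμ.2.1, hμ.2.2.1]
  simp

lemma abs_integral_sub_le (hs : 2 < s) (hμ : MemMs s μ) {f : ℝ → ℝ} (hf : f ∈ zolotarevF s) :
    |∫ x, f x ∂μ - (f 0 + iteratedDeriv 2 f 0 / 2)| ≤ ∫ x, |x| ^ s ∂μ := by
  obtain ⟨hP, hPint⟩ :=
    hμ.integrable_and_integral_quadratic hs.le (f 0) (deriv f 0) (iteratedDeriv 2 f 0 / 2)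
  have hR : Integrable (fun x => f x - taylorPoly2 f x) μ :=
    hμ.integrable_of_abs_le (hf.1.continuous.sub (by unfold taylorPoly2; fun_prop)) 1
      fun x => by linarith [abs_sub_taylorPoly2_le hs hf x]
  have hf_int : Integrable f μ := (hR.add hP).congr (.of_forall fun x => by simp [taylorPoly2])
  calc |∫ x, f x ∂μ - (f 0 + iteratedDeriv 2 f 0 / 2)|
      = |∫ x, f x - taylorPoly2 f x ∂μ| := by rw [← hPint, ← integral_sub hf_int hP]; rfl
    _ ≤ ∫ x, |f x - taylorPoly2 f x| ∂μ := abs_integral_le_integral_abs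
    _ ≤ ∫ x, |x| ^ s ∂μ := integral_mono hR.abs hμ.2.2.2 (abs_sub_taylorPoly2_le hs hf)

end MemMs

lemma abs_integral_sub_integral_le_zolotarevDist {s : ℝ} (hs : 2 < s) {τ ρ : Measure ℝ}
    (hτ : MemMs s τ) (hρ : MemMs s ρ) {f : ℝ → ℝ} (hf : f ∈ zolotarevF s) :
    |∫ x, f x ∂τ - ∫ x, f x ∂ρ| ≤ zolotarevDist s τ ρ := by
  refine le_csSup ⟨(∫ x, |x| ^ s ∂τ) + ∫ x, |x| ^ s ∂ρ, ?_⟩ ⟨f, hf, rfl⟩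
  rintro _ ⟨g, hg, rfl⟩
  have hτg := hτ.abs_integral_sub_le hs hg
  have hρg := hρ.abs_integral_sub_le hs hg
  rw [abs_sub_comm] at hρg
  exact (abs_sub_le _ _ _).trans (add_le_add hτg hρg)

lemma zolotarevDist_nonneg {s : ℝ} (hs : 2 < s) {τ ρ : Measure ℝ} (hτ : MemMs s τ)
    (hρ : MemMs s ρ) : 0 ≤ zolotarevDist s τ ρ := by
  simpa using abs_integral_sub_integral_le_zolotarevDist hs hτ hρ (zero_mem_zolotarevF s)

lemma abs_integral_comp_affine_sub_le {s : ℝ} (hs : 2 < s) {τ ρ : Measure ℝ}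
    (hτ : MemMs s τ) (hρ : MemMs s ρ) {f : ℝ → ℝ} (hf : f ∈ zolotarevF s)
    {a : ℝ} (ha : 0 < a) (c : ℝ) :
    |∫ x, f (a * x + c) ∂τ - ∫ x, f (a * x + c) ∂ρ| ≤ a ^ s * zolotarevDist s τ ρ := by
  have has : 0 < a ^ s := Real.rpow_pos_of_pos ha s
  have := abs_integral_sub_integral_le_zolotarevDist hs hτ hρ
    (comp_affine_div_mem_zolotarevF hf ha c)
  rwa [integral_div, integral_div, ← sub_div, abs_div, abs_of_pos has, div_le_iff₀' has] at this

lemma exists_abs_le_mul_one_add_rpow {s : ℝ} (hs : 2 < s) {f : ℝ → ℝ}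
    (hf : f ∈ zolotarevF s) : ∃ C, 0 ≤ C ∧ ∀ w, |f w| ≤ C * (1 + |w| ^ s) := by
  set K := |f 0| + |deriv f 0| + |iteratedDeriv 2 f 0 / 2|
  refine ⟨1 + K, by positivity, fun w => ?_⟩
  have hrem := abs_sub_taylorPoly2_le hs hf w
  have hpoly : |taylorPoly2 f w| ≤ K * (1 + |w| ^ s) :=
    abs_quadratic_le hs.le (f 0) (deriv f 0) (iteratedDeriv 2 f 0 / 2) w
  linarith [abs_sub_abs_le_abs_sub (f w) (taylorPoly2 f w), Real.rpow_nonneg (abs_nonneg w) s]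

lemma integrable_comp_linear_prod {s : ℝ} (hs : 2 < s) {f : ℝ → ℝ} (hf : f ∈ zolotarevF s)
    {μ ν : Measure ℝ} (hμ : MemMs s μ) (hν : MemMs s ν) (a b : ℝ) :
    Integrable (fun z : ℝ × ℝ => f (a * z.1 + b * z.2)) (μ.prod ν) := by
  have := hμ.1
  have := hν.1
  obtain ⟨C, hC, hfC⟩ := exists_abs_le_mul_one_add_rpow hs hf
  have hm : Integrable (fun z : ℝ × ℝ => 2 ^ (s - 1) * (|a| ^ s * |z.1| ^ s + |b| ^ s * |z.2| ^ s))
      (μ.prod ν) :=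
    (((hμ.2.2.2.comp_fst ν).const_mul _).add ((hν.2.2.2.comp_snd μ).const_mul _)).const_mul _
  refine integrable_of_abs_le_mul_one_add hm
    (hf.1.continuous.comp (by fun_prop)).aestronglyMeasurable C fun z => ?_
  have hlin := abs_add_rpow_le (s := s) (by linarith) (a * z.1) (b * z.2)
  rw [abs_mul, abs_mul, Real.mul_rpow (abs_nonneg a) (abs_nonneg _),
    Real.mul_rpow (abs_nonneg b) (abs_nonneg _)] at hlin
  exact (hfC _).trans (by gcongr)

lemma abs_integral_prod_sub_integral_prod_le {s : ℝ} (hs : 2 < s) {f : ℝ → ℝ}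
    (hf : f ∈ zolotarevF s) {a : ℝ} (ha : 0 < a) (b : ℝ) {τ ρ ν : Measure ℝ}
    (hτ : MemMs s τ) (hρ : MemMs s ρ) (hν : MemMs s ν) :
    |∫ z, f (a * z.1 + b * z.2) ∂τ.prod ν - ∫ z, f (a * z.1 + b * z.2) ∂ρ.prod ν| ≤
      a ^ s * zolotarevDist s τ ρ := by
  have := hτ.1
  have := hρ.1
  have := hν.1
  have hτν := integrable_comp_linear_prod hs hf hτ hν a b
  have hρν := integrable_comp_linear_prod hs hf hρ hν a b
  rw [integral_prod_symm _ hτν, integral_prod_symm _ hρν,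
    ← integral_sub hτν.integral_prod_right hρν.integral_prod_right]
  have hbound : ∀ y, ‖∫ x, f (a * x + b * y) ∂τ - ∫ x, f (a * x + b * y) ∂ρ‖ ≤
      a ^ s * zolotarevDist s τ ρ := fun y =>
    abs_integral_comp_affine_sub_le hs hτ hρ hf ha (b * y)
  simpa using norm_integral_le_of_norm_le_const (μ := ν) (.of_forall hbound)

lemma zolotarevDist_map_linear_le {s : ℝ} (hs : 2 < s) {a b : ℝ} (ha : 0 < a) (hb : 0 < b)
    {τ₀ τ₁ ρ₀ ρ₁ : Measure ℝ} (hτ₀ : MemMs s τ₀) (hτ₁ : MemMs s τ₁) (hρ₀ : MemMs s ρ₀)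
    (hρ₁ : MemMs s ρ₁) :
    zolotarevDist s ((τ₀.prod τ₁).map fun z => a * z.1 + b * z.2)
        ((ρ₀.prod ρ₁).map fun z => a * z.1 + b * z.2) ≤
      a ^ s * zolotarevDist s τ₀ ρ₀ + b ^ s * zolotarevDist s τ₁ ρ₁ := by
  have := hτ₀.1
  have := hτ₁.1
  have := hρ₀.1
  have := hρ₁.1
  have hg : Measurable fun z : ℝ × ℝ => a * z.1 + b * z.2 := by fun_prop
  have hswap : ∀ (f : ℝ → ℝ) (μ ν : Measure ℝ) [SFinite μ] [SFinite ν],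
      ∫ z, f (a * z.1 + b * z.2) ∂μ.prod ν = ∫ z, f (b * z.1 + a * z.2) ∂ν.prod μ :=
    fun f μ ν _ _ => by
      rw [← integral_prod_swap]
      simp only [Prod.fst_swap, Prod.snd_swap, add_comm]
  refine Real.sSup_le ?_ (add_nonneg
    (mul_nonneg (Real.rpow_nonneg ha.le s) (zolotarevDist_nonneg hs hτ₀ hρ₀))
    (mul_nonneg (Real.rpow_nonneg hb.le s) (zolotarevDist_nonneg hs hτ₁ hρ₁)))
  rintro _ ⟨f, hf, rfl⟩
  rw [integral_map hg.aemeasurable hf.1.continuous.aestronglyMeasurable,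
    integral_map hg.aemeasurable hf.1.continuous.aestronglyMeasurable]
  calc _ ≤ |∫ z, f (a * z.1 + b * z.2) ∂τ₀.prod τ₁ - ∫ z, f (a * z.1 + b * z.2) ∂ρ₀.prod τ₁| +
        |∫ z, f (a * z.1 + b * z.2) ∂ρ₀.prod τ₁ - ∫ z, f (a * z.1 + b * z.2) ∂ρ₀.prod ρ₁| :=
        abs_sub_le _ _ _
    _ ≤ a ^ s * zolotarevDist s τ₀ ρ₀ + b ^ s * zolotarevDist s τ₁ ρ₁ := by
        refine add_le_add (abs_integral_prod_sub_integral_prod_le hs hf ha b hτ₀ hρ₀ hτ₁) ?_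
        rw [hswap f ρ₀ τ₁, hswap f ρ₀ ρ₁]
        exact abs_integral_prod_sub_integral_prod_le hs hf hb a hτ₁ hρ₁ hρ₀

lemma rpow_add_one_sub_rpow_lt_one {p r : ℝ} (hp : p ∈ Set.Ioo (0 : ℝ) 1) (hr : 1 < r) :
    p ^ r + (1 - p) ^ r < 1 := by
  have h₀ : p ^ r < p := by
    simpa using Real.rpow_lt_rpow_of_exponent_gt hp.1 hp.2 hr
  have h₁ : (1 - p) ^ r < 1 - p := by
    simpa using Real.rpow_lt_rpow_of_exponent_gt (sub_pos.2 hp.2) (by linarith [hp.1]) hr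
  linarith

/-- inequality (22), contraction property of `T`:
for `s ∈ (2,3]` and `p_{00}, p_{11} ∈ (0,1)`, with
`ξ = max_i (p_{ii}^{s/2} + (1-p_{ii})^{s/2})` one has `ξ < 1` and
`ζ_s^∨(T(τ_0,τ_1), T(ρ_0,ρ_1)) ≤ ξ ζ_s^∨((τ_0,τ_1),(ρ_0,ρ_1))` on `M²`. -/
theorem Tmap_contraction
    (s : ℝ) (hs : s ∈ Set.Ioc (2 : ℝ) 3)
    (p00 p11 : ℝ) (hp00 : p00 ∈ Set.Ioo (0 : ℝ) 1) (hp11 : p11 ∈ Set.Ioo (0 : ℝ) 1)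
    (ξ : ℝ)
    (hξ : ξ = max (p00 ^ (s / 2) + (1 - p00) ^ (s / 2))
                  (p11 ^ (s / 2) + (1 - p11) ^ (s / 2))) :
    ξ < 1 ∧
    ∀ τ ρ : Measure ℝ × Measure ℝ,
      MemMs s τ.1 → MemMs s τ.2 → MemMs s ρ.1 → MemMs s ρ.2 →
      zolotarevDistMax s (Tmap p00 p11 τ) (Tmap p00 p11 ρ) ≤ ξ * zolotarevDistMax s τ ρ := by
  have hs2 : 2 < s := hs.1
  have hξ_lt : ∀ p ∈ Set.Ioo (0 : ℝ) 1, p ^ (s / 2) + (1 - p) ^ (s / 2) < 1 := fun p hp =>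
    rpow_add_one_sub_rpow_lt_one hp (by linarith)
  refine ⟨hξ ▸ max_lt (hξ_lt p00 hp00) (hξ_lt p11 hp11), fun τ ρ hτ₀ hτ₁ hρ₀ hρ₁ => ?_⟩
  have hmax_nonneg : 0 ≤ zolotarevDistMax s τ ρ :=
    (zolotarevDist_nonneg hs2 hτ₀ hρ₀).trans (le_max_left _ _)
  have hcomponent : ∀ p q : ℝ, 0 < p → 0 < q → p ^ (s / 2) + q ^ (s / 2) ≤ ξ →
      zolotarevDist s ((τ.1.prod τ.2).map fun z => √p * z.1 + √q * z.2)
        ((ρ.1.prod ρ.2).map fun z => √p * z.1 + √q * z.2) ≤ ξ * zolotarevDistMax s τ ρ := by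
    intro p q hp hq hpq
    rw [Real.rpow_div_two_eq_sqrt _ hp.le, Real.rpow_div_two_eq_sqrt _ hq.le] at hpq
    calc _ ≤ √p ^ s * zolotarevDist s τ.1 ρ.1 + √q ^ s * zolotarevDist s τ.2 ρ.2 :=
          zolotarevDist_map_linear_le hs2 (Real.sqrt_pos.2 hp) (Real.sqrt_pos.2 hq)
            hτ₀ hτ₁ hρ₀ hρ₁
      _ ≤ (√p ^ s + √q ^ s) * zolotarevDistMax s τ ρ := by
          rw [add_mul]
          gcongr
          exacts [le_max_left _ _, le_max_right _ _]
      _ ≤ ξ * zolotarevDistMax s τ ρ := by gcongr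
  exact max_le (hcomponent _ _ hp00.1 (sub_pos.2 hp00.2) (hξ ▸ le_max_left _ _))
    (hcomponent _ _ (sub_pos.2 hp11.2) hp11.1 (hξ ▸ add_comm (p11 ^ (s / 2)) _ ▸ le_max_right _ _))
end
end
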